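/- arXiv:1801.07197 — 3 statements merged into one kernel-verified Lean document; each statement's English description precedes it below -/
import Mathlib

section
/- Let k be a positive integer, ε > 0 a real number, and d a positive integer. If G is a finite group generated by d elements such that P_{G,w_k}(g) ≥ ε for some g ∈ G, where w_k = [x_1,…,x_k] is the left-normed commutator word, then G has a normal subgroup N which is nilpotent of class less than k (γ_k(N) = 1) and whose index satisfies |G/N| ≤ n!^{n!^d}, where n = ⌊k/ε⌋. -/
open scoped Classical

/-- The commutator `[x, y] = x⁻¹y⁻¹xy` (the convention used in the paper). -/
def pcomm {G : Type*} [Group G] (x y : G) : G := x⁻¹ * y⁻¹ * x * y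

/-- The left-normed commutator word `w_k = [x₁, …, x_k] ∈ F_k`,
defined inductively by `w₁ = x₁` and `w_{j+1} = [w_j, x_{j+1}]`. -/
def commWord : (k : ℕ) → FreeGroup (Fin k)
  | 0 => 1
  | 1 => FreeGroup.of 0
  | (k + 2) =>
      pcomm (FreeGroup.map Fin.castSucc (commWord (k + 1))) (FreeGroup.of (Fin.last (k + 1)))

/-- The left-normed commutator `[g₁, …, g_k]` of group elements. -/
def commElt {G : Type*} [Group G] : {k : ℕ} → (Fin k → G) → G
  | 0, _ => 1
  | 1, f => f 0
  | (_ + 2), f => pcomm (commElt (fun i => f i.castSucc)) (f (Fin.last _))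

/-- The word `[x₁², x₂, …, x_k] ∈ F_k`, defined inductively by
`u₁ = x₁²` and `u_{j+1} = [u_j, x_{j+1}]`. -/
def sqCommWord : (k : ℕ) → FreeGroup (Fin k)
  | 0 => 1
  | 1 => FreeGroup.of 0 ^ 2
  | (k + 2) =>
      pcomm (FreeGroup.map Fin.castSucc (sqCommWord (k + 1))) (FreeGroup.of (Fin.last (k + 1)))

/-- `P_{G,w}(g) = |w_G⁻¹(g)| / |G|^k`, the probability that the word map of `w`
takes the value `g` on a uniformly random `k`-tuple. -/
noncomputable def wordProb {k : ℕ} {G : Type*} [Group G] (w : FreeGroup (Fin k)) (g : G) : ℝ :=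
  (Nat.card {f : Fin k → G // FreeGroup.lift f w = g} : ℝ) / (Nat.card G : ℝ) ^ k

/-- A group is residually finite if every nontrivial element is excluded by
some normal subgroup of finite index. -/
def ResiduallyFinite (Γ : Type*) [Group Γ] : Prop :=
  ∀ g : Γ, g ≠ 1 → ∃ Δ : Subgroup Γ, Δ.Normal ∧ Δ.FiniteIndex ∧ g ∉ Δ

/-- A word `w ≠ 1` is a probabilistic identity of `Γ` if for some `ε > 0` every
finite quotient `H` of `Γ` satisfies `P_{H,w}(1) ≥ ε`. -/
def IsProbIdentity {k : ℕ} (Γ : Type*) [Group Γ] (w : FreeGroup (Fin k)) : Prop :=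
  w ≠ 1 ∧ ∃ ε : ℝ, 0 < ε ∧
    ∀ (Δ : Subgroup Γ) [Δ.Normal], Δ.FiniteIndex → ε ≤ wordProb w (1 : Γ ⧸ Δ)

/-- `G(H)`: the intersection of the kernels of all homomorphisms from `G` to `H`. -/
def kerInt (G H : Type*) [Group G] [Group H] : Subgroup G := ⨅ φ : G →* H, φ.ker

/-- A word `1 ≠ w ∈ F_k` is good if for every `ε > 0` there is a word `1 ≠ v ∈ F_m`,
depending only on `w` and `ε`, which is an identity of every finite group `G`
satisfying `P_{G,w}(g) ≥ ε` for some `g ∈ G`. -/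
def IsGood {k : ℕ} (w : FreeGroup (Fin k)) : Prop :=
  w ≠ 1 ∧ ∀ ε : ℝ, 0 < ε → ∃ (m : ℕ) (v : FreeGroup (Fin m)), v ≠ 1 ∧
    ∀ (G : Type) [Group G] [Finite G],
      (∃ g : G, ε ≤ wordProb w g) → ∀ f : Fin m → G, FreeGroup.lift f v = 1


/-!
For a normal subgroup `K` let `p_j(K)` be the probability that `[x₁, …, x_j] ∈ K` for random
`x ∈ Gʲ`. Since the fibre of `z ↦ [h, z]` over `g` is empty or a coset of `C_G(h)`, we have
`P_{G,w_k}(g) ≤ P_{G,w_k}(1) = p_k(1)`. Let `n = ⌊k/ε⌋` and let `N` be the intersection of the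
kernels of all homomorphisms `G → Sₙ`; it lies in every subgroup of index at most `n`, and has
index at most `n!^{n!^d}` because there are at most `n!^d` such homomorphisms.

Averaging over the last coordinate, `p_{j+2}(K)` is the mean of `1 / [G : C_{G/K}(hK)]` over
`h = [x₁, …, x_{j+1}]`. Either that index is `> n`, or the centralizer contains `N`, i.e. `h`
lies in `K' = C_{G/K}(NK/K)`. Hence `p_{j+2}(K) ≤ 1/(n+1) + p_{j+1}(K')`, with `[K', N] ≤ K`.
Starting from `p_k(1) ≥ ε > k/(n+1)` and descending `k - 1` times we reach some `K` with
`p_1(K) = 1/[G : K] > 1/(n+1)`, so `N ≤ K`; unwinding the chain gives `γ_k(N) = 1`.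
-/

open Finset
open scoped BigOperators

section Commutator

variable {G : Type*} [Group G]

lemma pcomm_eq_one_iff {a b : G} : pcomm a b = 1 ↔ Commute a b := by
  rw [pcomm, ← mul_inv_rev, mul_assoc, inv_mul_eq_one, eq_comm]
  rfl

lemma map_pcomm {H : Type*} [Group H] (φ : G →* H) (a b : G) :
    φ (pcomm a b) = pcomm (φ a) (φ b) := by
  simp only [pcomm, map_mul, map_inv]

lemma pcomm_mem_iff {K : Subgroup G} [K.Normal] {a b : G} :
    pcomm a b ∈ K ↔ Commute (a : G ⧸ K) (b : G ⧸ K) := by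
  rw [← QuotientGroup.eq_one_iff, ← QuotientGroup.mk'_apply, map_pcomm, pcomm_eq_one_iff]
  rfl

lemma FreeGroup.lift_map {α β : Type*} (f : β → G) (q : α → β) (w : FreeGroup α) :
    FreeGroup.lift f (FreeGroup.map q w) = FreeGroup.lift (f ∘ q) w := by
  rw [← MonoidHom.comp_apply]
  congr 1
  exact FreeGroup.ext_hom _ _ fun _ => by simp

lemma lift_commWord : ∀ {k : ℕ} (f : Fin k → G), FreeGroup.lift f (commWord k) = commElt f
  | 0, _ => map_one _
  | 1, _ => FreeGroup.lift_apply_of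
  | _ + 2, f => by
    rw [commWord, commElt, map_pcomm, FreeGroup.lift_map, FreeGroup.lift_apply_of, lift_commWord]
    rfl

lemma commElt_snoc {j : ℕ} (x : Fin (j + 1) → G) (z : G) :
    commElt (Fin.snoc x z : Fin (j + 2) → G) = pcomm (commElt x) z := by
  simp only [commElt, Fin.snoc_castSucc, Fin.snoc_last]

end Commutator

section CentralizerMod

variable {G : Type*} [Group G]

def centralizerMod (K : Subgroup G) [K.Normal] (S : Set G) : Subgroup G :=
  (Subgroup.centralizer (QuotientGroup.mk' K '' S)).comap (QuotientGroup.mk' K)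

variable {K : Subgroup G} [K.Normal]

lemma mem_centralizerMod {S : Set G} {x : G} :
    x ∈ centralizerMod K S ↔ ∀ a ∈ S, Commute (a : G ⧸ K) x := by
  simp only [centralizerMod, Subgroup.mem_comap, Subgroup.mem_centralizer_iff,
    Set.forall_mem_image, QuotientGroup.mk'_apply]
  rfl

instance centralizerMod_normal (N : Subgroup G) [N.Normal] : (centralizerMod K N).Normal := by
  have : (N.map (QuotientGroup.mk' K)).Normal :=
    ‹N.Normal›.map _ (QuotientGroup.mk'_surjective K)
  rw [centralizerMod, ← Subgroup.coe_map]
  infer_instance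

lemma commutator_centralizerMod_le (N : Subgroup G) : ⁅centralizerMod K N, N⁆ ≤ K := by
  rw [Subgroup.commutator_le]
  intro x hx a ha
  rw [← QuotientGroup.eq_one_iff, ← QuotientGroup.mk'_apply, map_commutatorElement,
    commutatorElement_eq_one_iff_commute]
  exact (mem_centralizerMod.mp hx a ha).symm

lemma le_centralizerMod_singleton_iff {N : Subgroup G} {h : G} :
    N ≤ centralizerMod K {h} ↔ h ∈ centralizerMod K N := by
  simp only [SetLike.le_def, mem_centralizerMod, Set.mem_singleton_iff, forall_eq,
    SetLike.mem_coe, Commute.symm_iff (a := (h : G ⧸ K))]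

end CentralizerMod

lemma expect_snoc {α M : Type*} [Fintype α] [AddCommMonoid M] [Module ℚ≥0 M] {j : ℕ}
    (f : (Fin (j + 1) → α) → M) :
    𝔼 x, f x = 𝔼 x : Fin j → α, 𝔼 z : α, f (Fin.snoc x z) := by
  rw [← Fintype.expect_equiv (Fin.snocEquiv fun _ => α) (fun p => f (Fin.snoc p.2 p.1)) f
    fun _ => rfl, ← univ_product_univ, expect_product' univ univ fun z x => f (Fin.snoc x z),
    expect_comm]

section CommEltMemProb

variable {G : Type*} [Group G] [Fintype G]

lemma expect_mem_subgroup (H : Subgroup G) :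
    𝔼 z : G, (if z ∈ H then 1 else 0 : ℝ) = (H.index : ℝ)⁻¹ := by
  have hcard : (Nat.card H : ℝ) * H.index = Fintype.card G := by
    exact_mod_cast Nat.card_eq_fintype_card (α := G) ▸ H.card_mul_index
  rw [Fintype.expect_eq_sum_div_card, sum_boole, ← hcard, ← Fintype.card_subtype,
    ← Nat.card_eq_fintype_card, div_mul_cancel_left₀ (Nat.cast_ne_zero.mpr Nat.card_pos.ne')]

/-- `P_{G/K, w_j}(1)`, computed in `G`. -/
noncomputable def commEltMemProb (K : Subgroup G) (j : ℕ) : ℝ :=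
  𝔼 x : Fin j → G, if commElt x ∈ K then 1 else 0

lemma commEltMemProb_one (K : Subgroup G) : commEltMemProb K 1 = (K.index : ℝ)⁻¹ := by
  rw [commEltMemProb, ← expect_mem_subgroup]
  exact Fintype.expect_equiv (Equiv.funUnique (Fin 1) G) _ _ fun _ => rfl

lemma commEltMemProb_add_two (K : Subgroup G) [K.Normal] (j : ℕ) :
    commEltMemProb K (j + 2) =
      𝔼 x : Fin (j + 1) → G, ((centralizerMod K {commElt x}).index : ℝ)⁻¹ := by
  rw [commEltMemProb, expect_snoc]
  simp only [commElt_snoc, ← expect_mem_subgroup, mem_centralizerMod, Set.mem_singleton_iff,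
    forall_eq, pcomm_mem_iff]

lemma wordProb_eq_expect {k : ℕ} (w : FreeGroup (Fin k)) (g : G) :
    wordProb w g = 𝔼 x : Fin k → G, if FreeGroup.lift x w = g then 1 else 0 := by
  rw [wordProb, Fintype.expect_eq_sum_div_card, sum_boole, Nat.card_eq_fintype_card,
    Fintype.card_subtype, Nat.card_eq_fintype_card, Fintype.card_fun, Fintype.card_fin]
  push_cast
  rfl

lemma wordProb_commWord_one (k : ℕ) :
    wordProb (commWord k) (1 : G) = commEltMemProb (⊥ : Subgroup G) k := by
  simp only [wordProb_eq_expect, lift_commWord, commEltMemProb, Subgroup.mem_bot]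

lemma expect_pcomm_eq_le (h g : G) :
    𝔼 z : G, (if pcomm h z = g then 1 else 0 : ℝ) ≤
      𝔼 z : G, if pcomm h z = 1 then 1 else 0 := by
  simp only [Fintype.expect_eq_sum_div_card, sum_boole]
  refine div_le_div_of_nonneg_right (Nat.cast_le.mpr ?_) (Nat.cast_nonneg _)
  obtain ⟨z₀, hz₀⟩ | hempty :=
    (univ.filter fun z => pcomm h z = g).eq_empty_or_nonempty.symm
  · refine card_le_card_of_injOn (· * z₀⁻¹) (fun z hz => ?_) fun _ _ _ _ => mul_right_cancel
    simp only [coe_filter, mem_filter, mem_univ, true_and, Set.mem_ofPred_eq] at hz hz₀ ⊢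
    have hconj : z⁻¹ * h * z = z₀⁻¹ * h * z₀ := by
      apply mul_left_cancel (a := h⁻¹)
      simp only [pcomm, mul_assoc] at hz hz₀ ⊢
      rw [hz, hz₀]
    calc pcomm h (z * z₀⁻¹) = h⁻¹ * (z₀ * (z⁻¹ * h * z) * z₀⁻¹) := by
          simp only [pcomm]; group
      _ = 1 := by rw [hconj]; group
  · simp [hempty]

lemma wordProb_commWord_le (g : G) :
    ∀ k : ℕ, wordProb (commWord k) g ≤ wordProb (commWord k) (1 : G)
  | 0 => by
    simp only [wordProb_eq_expect, lift_commWord]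
    exact expect_le_expect fun x _ => by split_ifs <;> simp_all [commElt]
  | 1 => by
    simp only [wordProb_eq_expect, lift_commWord]
    exact le_of_eq (Fintype.expect_equiv (Equiv.mulRight fun _ => g⁻¹) _ _ fun _ =>
      if_congr mul_inv_eq_one.symm rfl rfl)
  | j + 2 => by
    simp only [wordProb_eq_expect, lift_commWord, expect_snoc (j := j + 1), commElt_snoc]
    exact expect_le_expect fun x _ => expect_pcomm_eq_le _ g

end CommEltMemProb

section Descent

variable {G : Type*} [Group G] [Fintype G] {N : Subgroup G} {n : ℕ}

lemma inv_index_le_inv_succ_add_ite (hN : ∀ H : Subgroup G, H.index ≤ n → N ≤ H)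
    (H : Subgroup G) : (H.index : ℝ)⁻¹ ≤ (n + 1 : ℝ)⁻¹ + if N ≤ H then 1 else 0 := by
  by_cases hH : H.index ≤ n
  · rw [if_pos (hN H hH)]
    have : (1 : ℝ) ≤ H.index :=
      Nat.one_le_cast.mpr (Nat.pos_of_ne_zero H.index_ne_zero_of_finite)
    linarith [inv_le_one_of_one_le₀ this, inv_nonneg.mpr (by positivity : (0 : ℝ) ≤ n + 1)]
  · have : (n + 1 : ℝ) ≤ H.index := by exact_mod_cast not_le.mp hH
    calc (H.index : ℝ)⁻¹ ≤ (n + 1 : ℝ)⁻¹ := inv_anti₀ (by positivity) this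
      _ ≤ _ := le_add_of_nonneg_right (by split_ifs <;> norm_num)

lemma commEltMemProb_add_two_le (hN : ∀ H : Subgroup G, H.index ≤ n → N ≤ H)
    (K : Subgroup G) [K.Normal] (j : ℕ) :
    commEltMemProb K (j + 2) ≤
      (n + 1 : ℝ)⁻¹ + commEltMemProb (centralizerMod K N) (j + 1) := by
  rw [commEltMemProb_add_two, commEltMemProb, ← Fintype.expect_const (ι := Fin (j + 1) → G)
    (n + 1 : ℝ)⁻¹, ← expect_add_distrib]
  refine expect_le_expect fun x _ => ?_
  simpa only [le_centralizerMod_singleton_iff] using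
    inv_index_le_inv_succ_add_ite hN (centralizerMod K {commElt x})

theorem lowerCentralSeries_le_of_lt_commEltMemProb [N.Normal]
    (hN : ∀ H : Subgroup G, H.index ≤ n → N ≤ H) :
    ∀ (j : ℕ) (K : Subgroup G) [K.Normal],
      (j + 1 : ℝ) / (n + 1) < commEltMemProb K (j + 1) → N.lowerCentralSeries j ≤ K
  | 0, K, _, hK => by
    rw [commEltMemProb_one, Nat.cast_zero, zero_add, one_div, inv_lt_inv₀ (by positivity)
      (Nat.cast_pos.mpr (Nat.pos_of_ne_zero K.index_ne_zero_of_finite))] at hK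
    exact hN K (Nat.le_of_lt_succ (by exact_mod_cast hK))
  | j + 1, K, _, hK => by
    have hK' : (j + 1 : ℝ) / (n + 1) < commEltMemProb (centralizerMod K N) (j + 1) := by
      have : ((j + 1 : ℕ) + 1 : ℝ) / (n + 1) = (j + 1) / (n + 1) + (n + 1 : ℝ)⁻¹ := by
        push_cast; ring
      linarith [commEltMemProb_add_two_le hN K j]
    exact (Subgroup.commutator_mono (lowerCentralSeries_le_of_lt_commEltMemProb hN j _ hK')
      le_rfl).trans (commutator_centralizerMod_le N)

end Descent

section KerInt

variable {G H : Type*} [Group G] [Group H]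

instance kerInt_normal : (kerInt G H).Normal :=
  Subgroup.normal_iInf_normal fun φ => φ.normal_ker

lemma kerInt_perm_le_of_index_le {n : ℕ} {K : Subgroup G} [K.FiniteIndex] (hK : K.index ≤ n) :
    kerInt G (Equiv.Perm (Fin n)) ≤ K := by
  have : Fintype (G ⧸ K) := Fintype.ofFinite _
  obtain ⟨e⟩ : Nonempty (G ⧸ K ↪ Fin n) := Function.Embedding.nonempty_of_card_le (by
    rwa [Fintype.card_fin, ← Nat.card_eq_fintype_card, ← Subgroup.index_eq_card])
  refine (iInf_le _ ((Equiv.Perm.viaEmbeddingHom e).comp (MulAction.toPermHom G (G ⧸ K)))).trans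
    fun x hx => ?_
  rw [MonoidHom.mem_ker, MonoidHom.comp_apply,
    (Equiv.Perm.viaEmbeddingHom_injective e).eq_iff' (map_one _)] at hx
  have hfix : x • ((1 : G) : G ⧸ K) = ((1 : G) : G ⧸ K) := congr($hx ((1 : G) : G ⧸ K))
  simpa [MulAction.Quotient.smul_mk, QuotientGroup.eq] using hfix

lemma MonoidHom.restrict_injective_of_closure_eq_top {S : Set G}
    (hS : Subgroup.closure S = ⊤) : Function.Injective fun (φ : G →* H) (s : S) => φ s :=
  fun _ _ h => MonoidHom.eq_of_eqOn_dense hS fun x hx => congr_fun h ⟨x, hx⟩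

lemma card_monoidHom_le [Finite H] {S : Finset G} (hS : Subgroup.closure (S : Set G) = ⊤) :
    Nat.card (G →* H) ≤ Nat.card H ^ S.card := by
  calc Nat.card (G →* H) ≤ Nat.card (S → H) :=
      Nat.card_le_card_of_injective _ (MonoidHom.restrict_injective_of_closure_eq_top hS)
    _ = Nat.card H ^ S.card := by rw [Nat.card_fun, Nat.card_eq_finsetCard]

lemma index_kerInt_le [Finite H] {d : ℕ}
    (hgen : ∃ S : Finset G, S.card ≤ d ∧ Subgroup.closure (S : Set G) = ⊤) :
    (kerInt G H).index ≤ Nat.card H ^ Nat.card H ^ d := by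
  obtain ⟨S, hSd, hS⟩ := hgen
  have : Finite (G →* H) :=
    Finite.of_injective _ (MonoidHom.restrict_injective_of_closure_eq_top hS)
  have : Fintype (G →* H) := Fintype.ofFinite _
  have hH : 0 < Nat.card H := Nat.card_pos
  calc (kerInt G H).index ≤ ∏ φ : G →* H, φ.ker.index := Subgroup.index_iInf_le _
    _ ≤ ∏ _φ : G →* H, Nat.card H := prod_le_prod' fun φ _ => by
      rw [Subgroup.index_ker]; exact Subgroup.card_le_card_group _
    _ = Nat.card H ^ Nat.card (G →* H) := by
      rw [prod_const, card_univ, Nat.card_eq_fintype_card (α := G →* H)]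
    _ ≤ Nat.card H ^ Nat.card H ^ d := Nat.pow_le_pow_right hH
      ((card_monoidHom_le hS).trans (Nat.pow_le_pow_right hH hSd))

end KerInt

theorem stmt1_general (k d : ℕ) (hk : 1 ≤ k) (ε : ℝ) (hε : 0 < ε)
    (G : Type*) [Group G] [Finite G]
    (hgen : ∃ S : Finset G, S.card ≤ d ∧ Subgroup.closure (S : Set G) = ⊤)
    (g : G) (h : ε ≤ wordProb (commWord k) g) :
    ∃ N : Subgroup G, N.Normal ∧ (⊤ : Subgroup ↥N).lowerCentralSeries (k - 1) = ⊥ ∧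
      N.index ≤ (Nat.floor ((k : ℝ) / ε)).factorial ^
        ((Nat.floor ((k : ℝ) / ε)).factorial ^ d) := by
  have := Fintype.ofFinite G
  set n := Nat.floor ((k : ℝ) / ε)
  refine ⟨kerInt G (Equiv.Perm (Fin n)), inferInstance, ?_, ?_⟩
  · have hkn : (k : ℝ) / (n + 1) < ε := by
      rw [div_lt_iff₀ (by positivity), mul_comm, ← div_lt_iff₀ hε]
      exact Nat.lt_floor_add_one _
    have hprob : ((k - 1 : ℕ) + 1 : ℝ) / (n + 1) <
        commEltMemProb (⊥ : Subgroup G) (k - 1 + 1) := by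
      rw [Nat.cast_sub hk, Nat.cast_one, sub_add_cancel, Nat.sub_add_cancel hk,
        ← wordProb_commWord_one]
      exact hkn.trans_le (h.trans (wordProb_commWord_le g k))
    have hlcs := lowerCentralSeries_le_of_lt_commEltMemProb
      (fun _ => kerInt_perm_le_of_index_le) (k - 1) ⊥ hprob
    rwa [← Subgroup.top_subtype_lowerCentralSeries, le_bot_iff,
      Subgroup.map_eq_bot_iff_of_injective _ (Subgroup.subtype_injective _)] at hlcs
  · simpa only [Nat.card_perm, Nat.card_fin] using index_kerInt_le (H := Equiv.Perm (Fin n)) hgen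

/-- If a `d`-generated finite group `G` satisfies `P_{G,w_k}(g) ≥ ε`
for some `g ∈ G`, then `G` has a normal subgroup `N`, nilpotent of class less
than `k`, with `|G/N| ≤ n!^{n!^d}` where `n = ⌊k/ε⌋`. -/
theorem stmt1 (k d : ℕ) (hk : 1 ≤ k) (hd : 1 ≤ d) (ε : ℝ) (hε : 0 < ε)
    (G : Type*) [Group G] [Finite G]
    (hgen : ∃ S : Finset G, S.card ≤ d ∧ Subgroup.closure (S : Set G) = ⊤)
    (g : G) (h : ε ≤ wordProb (commWord k) g) :
    ∃ N : Subgroup G, N.Normal ∧ (⊤ : Subgroup ↥N).lowerCentralSeries (k - 1) = ⊥ ∧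
      N.index ≤ (Nat.floor ((k : ℝ) / ε)).factorial ^
        ((Nat.floor ((k : ℝ) / ε)).factorial ^ d) :=
  stmt1_general k d hk ε hε G hgen g h
end

section
/- Let w = w(x_1, …, x_k) be a word and let w'(x_1, …, x_{k+1}) = [w(x_1, …, x_k), x_{k+1}]. Let G be a finite group and suppose that P_{G,w'}(g) ≥ ε > 0 for some g ∈ G. Then for every real δ with 0 < δ < ε, the probability that k independent uniformly random elements g_1, …, g_k ∈ G satisfy |G : C_G(w(g_1, …, g_k))| < 1/δ is strictly greater than ε − δ; that is, |{(g_1,…,g_k) ∈ G^k : |G : C_G(w(g_1,…,g_k))| < 1/δ}| / |G|^k > ε − δ. -/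
open scoped Classical

/-! For fixed `f`, the solutions `x` of `[w(f), x] = g` are empty or a right coset of
`C_G(w(f))`, so a uniformly random `x` solves it with probability at most
`|G : C_G(w(f))|⁻¹ ≤ 1`. Hence `ε ≤ P_{G,w'}(g)` bounds the average over `f` of
`|G : C_G(w(f))|⁻¹` from below, and a reverse Markov inequality shows that this quantity
exceeds `δ` for more than an `ε - δ` proportion of the tuples `f`. -/

theorem FreeGroup.lift_map_apply {α β G : Type*} [Group G] (φ : α → β) (F : β → G)
    (w : FreeGroup α) : FreeGroup.lift F (FreeGroup.map φ w) = FreeGroup.lift (F ∘ φ) w := by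
  induction w using FreeGroup.induction_on <;> simp_all

theorem lift_pcomm_map_castSucc {k : ℕ} {G : Type*} [Group G] (w : FreeGroup (Fin k))
    (F : Fin (k + 1) → G) :
    FreeGroup.lift F (pcomm (FreeGroup.map Fin.castSucc w) (FreeGroup.of (Fin.last k))) =
      pcomm (FreeGroup.lift (Fin.init F) w) (F (Fin.last k)) := by
  simp only [pcomm, map_mul, map_inv, FreeGroup.lift_map_apply, FreeGroup.lift_apply_of]
  rfl

theorem card_lift_pcomm_eq_sum {k : ℕ} {G : Type*} [Group G] [Fintype G]
    (w : FreeGroup (Fin k)) (g : G) :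
    Nat.card {F : Fin (k + 1) → G //
        FreeGroup.lift F (pcomm (FreeGroup.map Fin.castSucc w) (FreeGroup.of (Fin.last k))) = g} =
      ∑ f : Fin k → G, Nat.card {x : G // pcomm (FreeGroup.lift f w) x = g} := by
  rw [← Nat.card_sigma]
  refine Nat.card_congr (Equiv.trans ?_ (Equiv.subtypeProdEquivSigmaSubtype
    fun f x => pcomm (FreeGroup.lift f w) x = g))
  refine ((Fin.snocEquiv fun _ => G).symm.trans (Equiv.prodComm _ _)).subtypeEquiv fun F => ?_
  simp [lift_pcomm_map_castSucc]

theorem mul_inv_mem_centralizer_of_pcomm_eq {G : Type*} [Group G] {a x y : G}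
    (h : pcomm a x = pcomm a y) : x * y⁻¹ ∈ Subgroup.centralizer {a} := by
  have hconj : x⁻¹ * a * x = y⁻¹ * a * y := by
    simpa only [pcomm, mul_assoc, mul_right_inj] using h
  rw [Subgroup.mem_centralizer_singleton_iff]
  calc x * y⁻¹ * a = x * (y⁻¹ * a * y) * y⁻¹ := by group
    _ = x * (x⁻¹ * a * x) * y⁻¹ := by rw [hconj]
    _ = a * (x * y⁻¹) := by group

theorem card_pcomm_eq_le_card_centralizer {G : Type*} [Group G] [Finite G] (a g : G) :
    Nat.card {x : G // pcomm a x = g} ≤ Nat.card (Subgroup.centralizer {a}) := by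
  rcases isEmpty_or_nonempty {x : G // pcomm a x = g} with _ | ⟨x₀, hx₀⟩
  · simp
  · refine Nat.card_le_card_of_injective
      (fun x => ⟨x.1 * x₀⁻¹, mul_inv_mem_centralizer_of_pcomm_eq (x.2.trans hx₀.symm)⟩)
      fun x y hxy => Subtype.ext ?_
    simpa using congrArg Subtype.val hxy

theorem card_pcomm_eq_div_card_le_inv_index {G : Type*} [Group G] [Finite G] (a g : G) :
    (Nat.card {x : G // pcomm a x = g} : ℝ) / Nat.card G ≤
      ((Subgroup.centralizer {a}).index : ℝ)⁻¹ := by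
  set C := Subgroup.centralizer {a}
  have hindex : (C.index : ℝ) ≠ 0 := by exact_mod_cast Subgroup.index_ne_zero_of_finite
  have hcard : (0 : ℝ) < Nat.card C := by exact_mod_cast Nat.card_pos
  rw [← C.card_mul_index, Nat.cast_mul, div_le_iff₀ (by positivity), mul_comm (Nat.card C : ℝ),
    ← mul_assoc, inv_mul_cancel₀ hindex, one_mul]
  exact_mod_cast card_pcomm_eq_le_card_centralizer a g

theorem wordProb_pcomm_map_castSucc {k : ℕ} {G : Type*} [Group G] [Fintype G]
    (w : FreeGroup (Fin k)) (g : G) :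
    wordProb (pcomm (FreeGroup.map Fin.castSucc w) (FreeGroup.of (Fin.last k))) g =
      (∑ f : Fin k → G, (Nat.card {x : G // pcomm (FreeGroup.lift f w) x = g} : ℝ) / Nat.card G) /
        Fintype.card (Fin k → G) := by
  rw [wordProb, card_lift_pcomm_eq_sum, ← Finset.sum_div, Fintype.card_fun, Fintype.card_fin,
    Nat.card_eq_fintype_card, pow_succ]
  push_cast
  ring

open Finset in
theorem sub_lt_card_filter_div_of_le_average {ι : Type*} [Fintype ι] [Nonempty ι] {u : ι → ℝ}
    (hu : ∀ i, u i ≤ 1) {ε δ : ℝ} (hδ : 0 < δ) (hδε : δ < ε)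
    (havg : ε ≤ (∑ i, u i) / Fintype.card ι) :
    ε - δ < (#{i | δ < u i} : ℝ) / Fintype.card ι := by
  have hcard : (#{i | ¬δ < u i} : ℝ) = Fintype.card ι - #{i | δ < u i} := by
    rw [eq_sub_iff_add_eq, add_comm, ← card_univ]
    exact_mod_cast card_filter_add_card_filter_not (s := univ) (δ < u ·)
  set n : ℝ := (Fintype.card ι : ℝ)
  set m : ℝ := (#{i | δ < u i} : ℝ)
  have hn : 0 < n := by positivity
  have hm₀ : 0 ≤ m := by positivity
  have hlarge : ∑ i ∈ {i | δ < u i}, u i ≤ m := by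
    simpa using sum_le_card_nsmul _ u 1 fun i _ => hu i
  have hsmall : ∑ i ∈ {i | ¬δ < u i}, u i ≤ (n - m) * δ := by
    rw [← hcard, ← nsmul_eq_mul]
    exact sum_le_card_nsmul _ u δ fun i hi => not_lt.mp (mem_filter.mp hi).2
  have hsum : ε * n ≤ m + (n - m) * δ := by
    rw [le_div_iff₀ hn, ← sum_filter_add_sum_filter_not _ (δ < u ·)] at havg
    linarith
  have hm : 0 < m := by
    by_contra! hm
    nlinarith [mul_pos (sub_pos.2 hδε) hn]
  rw [lt_div_iff₀ hn]
  nlinarith [mul_pos hm hδ]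

/-- Lemma 2.1: If `P_{G,w'}(g) ≥ ε` for `w' = [w, x_{k+1}]`, then for
`0 < δ < ε`, the proportion of tuples `(g₁, …, g_k)` with
`|G : C_G(w(g₁, …, g_k))| < 1/δ` exceeds `ε - δ`. -/
theorem stmt12 (k : ℕ) (w : FreeGroup (Fin k)) (G : Type*) [Group G] [Finite G]
    (ε δ : ℝ) (hδ : 0 < δ) (hδε : δ < ε) (g : G)
    (h : ε ≤ wordProb (pcomm (FreeGroup.map Fin.castSucc w) (FreeGroup.of (Fin.last k))) g) :
    ε - δ <
      (Nat.card {f : Fin k → G //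
          ((Subgroup.centralizer ({FreeGroup.lift f w} : Set G)).index : ℝ) < 1 / δ} : ℝ) /
        (Nat.card G : ℝ) ^ k := by
  have : Fintype G := Fintype.ofFinite G
  have hindex (f : Fin k → G) : 1 ≤ ((Subgroup.centralizer {FreeGroup.lift f w}).index : ℝ) := by
    exact_mod_cast Nat.one_le_iff_ne_zero.2 Subgroup.index_ne_zero_of_finite
  have havg : ε ≤ (∑ f : Fin k → G, ((Subgroup.centralizer {FreeGroup.lift f w}).index : ℝ)⁻¹) /
      Fintype.card (Fin k → G) := by
    refine h.trans ?_
    rw [wordProb_pcomm_map_castSucc]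
    gcongr with f
    exact card_pcomm_eq_div_card_le_inv_index _ _
  convert sub_lt_card_filter_div_of_le_average (fun f => inv_le_one_of_one_le₀ (hindex f))
    hδ hδε havg using 2
  · rw [Nat.card_eq_fintype_card, Fintype.card_subtype, one_div]
    congr! 3 with f
    exact lt_inv_comm₀ (by linarith [hindex f]) hδ
  · simp [Nat.card_eq_fintype_card]
end

section
/- Let G be a finite group and suppose P_{G, x_1^2}(g) ≥ ε > 0 for some g ∈ G (that is, the square map x ↦ x^2 takes the value g on at least an ε-proportion of G). Then G(S_n) is abelian, where n = ⌊2/ε²⌋ and G(S_n) is the intersection of the kernels of all homomorphisms from G to the symmetric group S_n. -/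
open scoped Classical

/-!
Let `T` be the set of square roots of `g`, so `|T| ≥ ε|G|`. If `x, y ∈ T` then `x` inverts
`u = xy⁻¹` by conjugation, so the pairs of `T × T` with quotient `u` number at most
`|C_G(u)|`. Averaging over the `|T|²` pairs yields a set `A` with `|A| ≥ |T|²/(2|G|)` all of
whose elements have centralizers of order at least `|T|²/(2|G|) ≥ ε²|G|/2`. Subgroups of that
order have index at most `n`, hence contain `G(S_n)` (act on the cosets). So `G(S_n)` lies both
in `⟨A⟩` and in the centralizer of `A`, which makes it abelian.
-/

open Finset

theorem Finset.sum_le_two_mul_mul_card_filter {ι : Type*} (s : Finset ι) (f : ι → ℕ)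
    {M : ℕ} (hf : ∀ i ∈ s, f i ≤ M) :
    ∑ i ∈ s, f i ≤ 2 * M * #{i ∈ s | ∑ j ∈ s, f j ≤ 2 * #s * f i} := by
  set S := ∑ j ∈ s, f j
  have hsplit : ∑ i ∈ s with S ≤ 2 * #s * f i, f i + ∑ i ∈ s with ¬S ≤ 2 * #s * f i, f i = S :=
    sum_filter_add_sum_filter_not s _ f
  have hlarge : ∑ i ∈ s with S ≤ 2 * #s * f i, f i ≤ #{i ∈ s | S ≤ 2 * #s * f i} * M :=
    sum_le_card_nsmul _ _ _ fun i hi => hf i (mem_filter.mp hi).1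
  have hsmall : 2 * #s * ∑ i ∈ s with ¬S ≤ 2 * #s * f i, f i ≤ #s * S :=
    calc 2 * #s * ∑ i ∈ s with ¬S ≤ 2 * #s * f i, f i
        = ∑ i ∈ s with ¬S ≤ 2 * #s * f i, 2 * #s * f i := mul_sum _ _ _
      _ ≤ #{i ∈ s | ¬S ≤ 2 * #s * f i} * S :=
        sum_le_card_nsmul _ _ _ fun i hi => (not_le.mp (mem_filter.mp hi).2).le
      _ ≤ #s * S := Nat.mul_le_mul_right _ (card_filter_le _ _)
  rcases s.eq_empty_or_nonempty with rfl | hs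
  · simp [S]
  · have hsmall' : 2 * ∑ i ∈ s with ¬S ≤ 2 * #s * f i, f i ≤ S :=
      le_of_mul_le_mul_left (by linarith) hs.card_pos
    linarith

section

variable {G : Type*} [Group G]

theorem kerInt_le_ker {H : Type*} [Group H] (φ : G →* H) : kerInt G H ≤ φ.ker :=
  iInf_le _ φ

theorem kerInt_perm_le_of_index_le_s17 {n : ℕ} (H : Subgroup G) [H.FiniteIndex]
    (hH : H.index ≤ n) : kerInt G (Equiv.Perm (Fin n)) ≤ H := by
  have : Fintype (G ⧸ H) := H.fintypeQuotientOfFiniteIndex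
  have hcard : Fintype.card (G ⧸ H) ≤ Fintype.card (Fin n) := by
    rwa [Fintype.card_fin, ← Nat.card_eq_fintype_card, ← Subgroup.index]
  obtain ⟨e⟩ := Function.Embedding.nonempty_of_card_le hcard
  calc kerInt G (Equiv.Perm (Fin n))
      ≤ ((Equiv.Perm.viaEmbeddingHom e).comp (MulAction.toPermHom G (G ⧸ H))).ker :=
        kerInt_le_ker _
    _ = H.normalCore :=
        (MonoidHom.ker_comp_of_injective _ _ (Equiv.Perm.viaEmbeddingHom_injective e)).trans
          H.normalCore_eq_ker.symm
    _ ≤ H := H.normalCore_le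

theorem Subgroup.index_le_floor_of_card_le_mul [Finite G] {c : ℝ} (H : Subgroup G)
    (hH : (Nat.card G : ℝ) ≤ c * Nat.card H) : H.index ≤ ⌊c⌋₊ := by
  have hpos : (0 : ℝ) < Nat.card H := by exact_mod_cast Nat.card_pos
  have hmul : (H.index : ℝ) * Nat.card H = Nat.card G := by exact_mod_cast H.index_mul_card
  exact Nat.le_floor (le_of_mul_le_mul_right (by linarith) hpos)

theorem Subgroup.isMulCommutative_of_le_closure_of_le_centralizer {K : Subgroup G} {A : Set G} (hcl : K ≤ Subgroup.closure A)
    (hcen : K ≤ Subgroup.centralizer A) : IsMulCommutative K := by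
  rw [← Subgroup.le_centralizer_iff_isMulCommutative]
  calc K ≤ Subgroup.centralizer A := hcen
    _ = Subgroup.centralizer (Subgroup.closure A : Set G) := (Subgroup.centralizer_closure A).symm
    _ ≤ Subgroup.centralizer K := Subgroup.centralizer_le hcl

theorem wordProb_sq [Fintype G] (g : G) :
    wordProb ((FreeGroup.of 0 : FreeGroup (Fin 1)) ^ 2) g
      = #{x : G | x ^ 2 = g} / Nat.card G := by
  have e : {f : Fin 1 → G // FreeGroup.lift f (FreeGroup.of 0 ^ 2) = g} ≃ {x : G // x ^ 2 = g} :=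
    (Equiv.funUnique (Fin 1) G).subtypeEquiv fun f => by simp [Equiv.funUnique]
  rw [wordProb, Nat.card_congr e, Nat.card_eq_fintype_card, Fintype.card_subtype, pow_one]

theorem conj_mul_inv_eq_inv_of_sq_eq {x y : G} (h : x ^ 2 = y ^ 2) :
    x * (x * y⁻¹) * x⁻¹ = (x * y⁻¹)⁻¹ := by
  calc x * (x * y⁻¹) * x⁻¹ = x ^ 2 * y⁻¹ * x⁻¹ := by rw [sq]; group
    _ = y ^ 2 * y⁻¹ * x⁻¹ := by rw [h]
    _ = (x * y⁻¹)⁻¹ := by group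

theorem card_filter_conj_eq_le_card_centralizer [Fintype G] (u v : G) :
    #{x : G | x * u * x⁻¹ = v} ≤ Nat.card (Subgroup.centralizer {u}) := by
  rcases (filter (fun x : G => x * u * x⁻¹ = v) univ).eq_empty_or_nonempty with he | ⟨x₀, hx₀⟩
  · simp [he]
  rw [← Fintype.card_subtype, ← Nat.card_eq_fintype_card]
  refine Nat.card_le_card_of_injective
    (fun x => ⟨x₀⁻¹ * x, Subgroup.mem_centralizer_singleton_iff.mpr ?_⟩) fun x y hxy => ?_
  · have h₀ : x₀ * u * x₀⁻¹ = v := (mem_filter.mp hx₀).2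
    calc x₀⁻¹ * x * u = x₀⁻¹ * ((x : G) * u * (x : G)⁻¹) * x := by group
      _ = x₀⁻¹ * (x₀ * u * x₀⁻¹) * x := by rw [x.2, h₀]
      _ = u * (x₀⁻¹ * x) := by group
  · exact Subtype.ext (mul_left_cancel (congrArg Subtype.val hxy))

theorem card_filter_mul_inv_eq_le_card_centralizer [Fintype G] {T : Finset G}
    (hT : ∀ x ∈ T, ∀ y ∈ T, x ^ 2 = y ^ 2) (u : G) :
    #{p ∈ T ×ˢ T | p.1 * p.2⁻¹ = u} ≤ Nat.card (Subgroup.centralizer {u}) := by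
  refine le_trans (card_le_card_of_injOn Prod.fst (t := {x : G | x * u * x⁻¹ = u⁻¹})
    (fun p hp => ?_) fun p hp q hq hpq => ?_) (card_filter_conj_eq_le_card_centralizer u u⁻¹)
  · obtain ⟨hpT, rfl⟩ := mem_filter.mp hp
    rw [mem_product] at hpT
    simpa using conj_mul_inv_eq_inv_of_sq_eq (hT _ hpT.1 _ hpT.2)
  · obtain ⟨-, hp⟩ := mem_filter.mp hp
    obtain ⟨-, hq⟩ := mem_filter.mp hq
    refine Prod.ext hpq (inv_injective (mul_left_cancel (a := p.1) ?_))
    rw [hp, hpq, hq]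

theorem exists_large_finset_with_large_centralizers [Fintype G] {T : Finset G}
    (hT : ∀ x ∈ T, ∀ y ∈ T, x ^ 2 = y ^ 2) :
    ∃ A : Finset G, #T ^ 2 ≤ 2 * Fintype.card G * #A ∧
      ∀ u ∈ A, #T ^ 2 ≤ 2 * Fintype.card G * Nat.card (Subgroup.centralizer {u}) := by
  set f : G → ℕ := fun u => #{p ∈ T ×ˢ T | p.1 * p.2⁻¹ = u}
  have hsum : ∑ u, f u = #T ^ 2 := by
    rw [sq, ← card_product, card_eq_sum_card_fiberwise fun p _ => mem_univ (p.1 * p.2⁻¹)]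
  have hf : ∀ u, f u ≤ Nat.card (Subgroup.centralizer {u}) :=
    card_filter_mul_inv_eq_le_card_centralizer hT
  have hfN : ∀ u ∈ (univ : Finset G), f u ≤ Fintype.card G := fun u _ =>
    (hf u).trans ((Subgroup.card_le_card_group _).trans_eq Nat.card_eq_fintype_card)
  have key := sum_le_two_mul_mul_card_filter univ f hfN
  rw [hsum, card_univ] at key
  exact ⟨_, key, fun u hu => (mem_filter.mp hu).2.trans (Nat.mul_le_mul_left _ (hf u))⟩

end

/-- If the square map of a finite group `G` takes some value `g` with
probability at least `ε > 0`, then `G(S_n)` is abelian for `n = ⌊2/ε²⌋`. -/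
theorem stmt17 (G : Type*) [Group G] [Finite G] (ε : ℝ) (hε : 0 < ε) (g : G)
    (h : ε ≤ wordProb ((FreeGroup.of 0 : FreeGroup (Fin 1)) ^ 2) g)
    (n : ℕ) (hn : n = Nat.floor (2 / ε ^ 2)) :
    IsMulCommutative (kerInt G (Equiv.Perm (Fin n))) := by
  have : Fintype G := Fintype.ofFinite G
  set T : Finset G := {x | x ^ 2 = g}
  have hN : (0 : ℝ) < Fintype.card G := by exact_mod_cast Fintype.card_pos
  have hT : ε * Fintype.card G ≤ #T := by
    rwa [wordProb_sq, Nat.card_eq_fintype_card, le_div_iff₀ hN] at h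
  have hK : ∀ H : Subgroup G, #T ^ 2 ≤ 2 * Fintype.card G * Nat.card H →
      kerInt G (Equiv.Perm (Fin n)) ≤ H := by
    intro H hH
    refine hn ▸ kerInt_perm_le_of_index_le_s17 H (H.index_le_floor_of_card_le_mul ?_)
    have hH' : ((#T : ℕ) : ℝ) ^ 2 ≤ 2 * Fintype.card G * Nat.card H := by exact_mod_cast hH
    rw [Nat.card_eq_fintype_card, div_mul_eq_mul_div, le_div_iff₀ (by positivity)]
    nlinarith [mul_le_mul hT hT (by positivity) (by positivity)]
  obtain ⟨A, hA, hcen⟩ := exists_large_finset_with_large_centralizers (T := T)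
    fun x hx y hy => by simp only [T, mem_filter] at hx hy; rw [hx.2, hy.2]
  refine Subgroup.isMulCommutative_of_le_closure_of_le_centralizer (A := (A : Set G)) ?_ ?_
  · refine hK _ (hA.trans (Nat.mul_le_mul_left _ ?_))
    rw [← Set.ncard_coe_finset]
    exact Set.ncard_le_ncard Subgroup.subset_closure (Set.toFinite _)
  · rw [Subgroup.centralizer_eq_iInf]
    exact le_iInf₂ fun u hu => hK _ (hcen u hu)
end
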